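/- Let P be a string with shortest period p = p(P), and let Q be a suffix of P with |Q| ≥ 2p. Then p(Q) = p. -/
import Mathlib


/-- `S` has period `p` (1-based: `S[i+p] = S[i]` for all `1 ≤ i ≤ n-p`). -/
def HasPeriod (S : List ℤ) (p : ℕ) : Prop :=
  1 ≤ p ∧ p ≤ S.length ∧ ∀ i : ℕ, i + p < S.length → S[i]! = S[i + p]!

/-- The shortest period `p(S)` of a string `S`. -/
noncomputable def minPeriod (S : List ℤ) : ℕ :=
  sInf {p | HasPeriod S p}

/-- `W^t`: concatenation of `t` copies of `W`. -/
def listPow (W : List ℤ) (t : ℕ) : List ℤ :=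
  (List.replicate t W).flatten

lemma hasPeriod_length (S : List ℤ) (hS : S ≠ []) : HasPeriod S S.length :=
  ⟨List.length_pos_iff.mpr hS, le_refl _, fun _ h => absurd h (by omega)⟩

lemma hasPeriod_iter {S : List ℤ} {p : ℕ} (h : HasPeriod S p) :
    ∀ t i, i + t * p < S.length → S[i]! = S[i + t * p]! := by
  intro t
  induction t with
  | zero => simp
  | succ t ih =>
    intro i hlt
    have hsucc : (t + 1) * p = t * p + p := by ring
    have hp1 : 1 ≤ p := h.1
    have h1 : i + t * p < S.length := by omega
    have h2 : (i + t * p) + p < S.length := by omega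
    calc S[i]! = S[i + t * p]! := ih i h1
    _ = S[(i + t * p) + p]! := h.2.2 _ h2
    _ = S[i + (t + 1) * p]! := by rw [show (i + t * p) + p = i + (t+1) * p by ring]

lemma suffix_getElem! (P Q : List ℤ) (h : Q <:+ P) (i : ℕ) (hi : i < Q.length) :
    Q[i]! = P[(P.length - Q.length) + i]! := by
  obtain ⟨T, rfl⟩ := h
  have hk : (T ++ Q).length - Q.length = T.length := by
    simp
  rw [hk]
  rw [getElem!_pos Q i hi, getElem!_pos (T ++ Q) (T.length + i) (by simp; omega)]
  rw [List.getElem_append_right (by omega)]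
  congr 1
  omega


lemma minPeriod_is_period (S : List ℤ) (hS : S ≠ []) : HasPeriod S (minPeriod S) := by
  have h : minPeriod S ∈ {r | HasPeriod S r} :=
    Nat.sInf_mem ⟨S.length, hasPeriod_length S hS⟩
  exact h

lemma minPeriod_le {S : List ℤ} {r : ℕ} (h : HasPeriod S r) : minPeriod S ≤ r :=
  Nat.sInf_le (show r ∈ {r | HasPeriod S r} from h)

/-- If `p = p(P)` and `Q` is a suffix of `P` with `|Q| ≥ 2p`, then `p(Q) = p`. -/
theorem minPeriod_suffix (P : List ℤ) (hP : P ≠ [])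
    (Q : List ℤ) (hQ : Q <:+ P)
    (hlen : 2 * minPeriod P ≤ Q.length) :
    minPeriod Q = minPeriod P := by
  set p := minPeriod P with hp
  set n := P.length with hn
  have hPp : HasPeriod P p := minPeriod_is_period P hP
  obtain ⟨hp1, hpn, hperP⟩ := hPp
  have hQlen : Q.length ≤ n := hQ.length_le
  set k := n - Q.length with hk
  have hkQ : k + Q.length = n := by omega
  have hsuf : ∀ i, i < Q.length → Q[i]! = P[k + i]! := fun i hi => suffix_getElem! P Q hQ i hi
  -- Q has period p
  have hQp : HasPeriod Q p := by
    refine ⟨hp1, by omega, fun i hi => ?_⟩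
    rw [hsuf i (by omega), hsuf (i + p) hi]
    rw [show k + (i + p) = (k + i) + p by ring]
    exact hperP (k + i) (by omega)
  have hQne : Q ≠ [] := by
    intro h
    rw [h] at hlen
    simp at hlen
    omega
  set q := minPeriod Q with hq
  have hQq : HasPeriod Q q := minPeriod_is_period Q hQne
  obtain ⟨hq1, hqQ, hperQ⟩ := hQq
  have hq_le_p : q ≤ p := minPeriod_le hQp
  -- P has period q
  have hPq : HasPeriod P q := by
    refine ⟨hq1, by omega, fun i hi => ?_⟩
    set m := n - 1 - q - i with hm
    have hm' : i + q + 1 + m = n := by omega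
    set t := m / p with ht
    have hdm : p * t + m % p = m := Nat.div_add_mod m p
    have hr : m % p < p := Nat.mod_lt _ (by omega)
    have htp : t * p = p * t := mul_comm _ _
    set i' := i + t * p with hi'
    have hA : i' + q < n := by omega
    have hB : k ≤ i' := by omega
    set j := i' - k with hj
    have hjq : j + q < Q.length := by omega
    have e1 : P[i]! = P[i']! := hasPeriod_iter ⟨hp1, hpn, hperP⟩ t i (by omega)
    have e2 : P[i + q]! = P[i' + q]! := by
      have := hasPeriod_iter ⟨hp1, hpn, hperP⟩ t (i + q) (by omega)
      rw [this, show i + q + t * p = i' + q by omega]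
    have e3 : P[i']! = P[i' + q]! := by
      have h1 := hsuf j (by omega)
      have h2 := hsuf (j + q) hjq
      have hjk : k + j = i' := by omega
      have hjk2 : k + (j + q) = i' + q := by omega
      rw [hjk] at h1; rw [hjk2] at h2
      rw [← h1, ← h2]
      exact hperQ j hjq
    rw [e1, e2, e3]
  have hp_le_q : p ≤ q := minPeriod_le hPq
  omega
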